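/- arXiv:1507.00217 — 2 statements merged into one kernel-verified Lean document; each statement's English description precedes it below -/
import Mathlib

section
/- Define d : ℝ × (0,∞) → ℝ by d(x,t) = max{(t+1−|x−2|)₊, (t+1−|x+2|)₊} if t ≤ 1 and d(x,t) = (t+3−|x|)₊ if t > 1. Then for every x with |x| < 2, the function d is lower semicontinuous but not upper semicontinuous at the point (x, 1); in particular, d is discontinuous at (x,1). -/
open Filter Topology Set

/-!
Before the merging time `t = 1` the distance is that of two separate intervals, a continuous
function `distBeforeMerge` which never exceeds the distance after merging. Hence `d` is bounded
below by a continuous function agreeing with it at `(x, 1)`, which gives lower semicontinuity.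
Just after `t = 1` the gap at `x` has closed and `d (x, t) > 2`, whereas `d (x, 1) = |x| < 2`.
-/

theorem lowerSemicontinuousWithinAt_of_continuousWithinAt_le {α β : Type*} [TopologicalSpace α]
    [LinearOrder β] [TopologicalSpace β] [OrderTopology β] {f g : α → β} {s : Set α} {a : α}
    (hg : ContinuousWithinAt g s a) (hle : ∀ᶠ p in 𝓝[s] a, g p ≤ f p) (heq : g a = f a) :
    LowerSemicontinuousWithinAt f s a := fun y hy => by
  filter_upwards [hg.lowerSemicontinuousWithinAt y (hy.trans_eq heq.symm), hle] with p hyg hgf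
  exact hyg.trans_le hgf

theorem not_upperSemicontinuousWithinAt_of_frequently_le {α β : Type*} [TopologicalSpace α]
    [Preorder β] {f : α → β} {s : Set α} {a : α} {c : β}
    (hfreq : ∃ᶠ p in 𝓝[s] a, c ≤ f p) (hc : f a < c) :
    ¬ UpperSemicontinuousWithinAt f s a := fun hf =>
  let ⟨_, hlt, hle⟩ := ((hf c hc).and_frequently hfreq).exists
  (hlt.trans_le hle).false

def distBeforeMerge (x t : ℝ) : ℝ := max (max (t + 1 - |x - 2|) 0) (max (t + 1 - |x + 2|) 0)

def distAfterMerge (x t : ℝ) : ℝ := max (t + 3 - |x|) 0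

theorem continuous_distBeforeMerge : Continuous fun p : ℝ × ℝ => distBeforeMerge p.1 p.2 := by
  unfold distBeforeMerge
  fun_prop

theorem distBeforeMerge_le_distAfterMerge (x t : ℝ) : distBeforeMerge x t ≤ distAfterMerge x t := by
  have hsub : |x| - |2| ≤ |x - 2| := abs_sub_abs_le_abs_sub x 2
  have hadd : |x| - |-2| ≤ |x + 2| := by simpa using abs_sub_abs_le_abs_sub x (-2)
  rw [abs_two] at hsub
  rw [abs_neg, abs_two] at hadd
  unfold distBeforeMerge distAfterMerge
  apply max_le <;> apply max_le_max_right <;> linarith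

theorem distBeforeMerge_one {x : ℝ} (hx : |x| ≤ 2) : distBeforeMerge x 1 = |x| := by
  obtain ⟨hx₁, hx₂⟩ := abs_le.mp hx
  rw [distBeforeMerge, abs_of_nonpos (by linarith : x - 2 ≤ 0), abs_of_nonneg (by linarith : 0 ≤ x + 2)]
  rcases le_total 0 x with h | h
  · rw [abs_of_nonneg h]; simp only [max_def]; split_ifs <;> linarith
  · rw [abs_of_nonpos h]; simp only [max_def]; split_ifs <;> linarith

theorem distance_discontinuous_at_extinction
    (d : ℝ × ℝ → ℝ)
    (hd : ∀ p : ℝ × ℝ, 0 < p.2 →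
      d p = if p.2 ≤ 1 then max (max (p.2 + 1 - |p.1 - 2|) 0) (max (p.2 + 1 - |p.1 + 2|) 0)
            else max (p.2 + 3 - |p.1|) 0)
    (x : ℝ) (hx : |x| < 2) :
    LowerSemicontinuousWithinAt d (Set.univ ×ˢ Set.Ioi (0 : ℝ)) (x, 1) ∧
    ¬ UpperSemicontinuousWithinAt d (Set.univ ×ˢ Set.Ioi (0 : ℝ)) (x, 1) ∧
    ¬ ContinuousWithinAt d (Set.univ ×ˢ Set.Ioi (0 : ℝ)) (x, 1) := by
  set s : Set (ℝ × ℝ) := univ ×ˢ Ioi 0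
  have hd' : ∀ p ∈ s, d p =
      if p.2 ≤ 1 then distBeforeMerge p.1 p.2 else distAfterMerge p.1 p.2 :=
    fun p hp => hd p hp.2
  have hval : d (x, 1) = |x| := by
    rw [hd' (x, 1) ⟨trivial, mem_Ioi.mpr one_pos⟩, if_pos le_rfl, distBeforeMerge_one hx.le]
  have hbelow : ∀ p ∈ s, distBeforeMerge p.1 p.2 ≤ d p := fun p hp => by
    rw [hd' p hp]
    split_ifs
    exacts [le_rfl, distBeforeMerge_le_distAfterMerge p.1 p.2]
  have hlsc : LowerSemicontinuousWithinAt d s (x, 1) :=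
    lowerSemicontinuousWithinAt_of_continuousWithinAt_le
      continuous_distBeforeMerge.continuousWithinAt (eventually_nhdsWithin_of_forall hbelow)
      (by rw [hval, distBeforeMerge_one hx.le])
  have hvertical : Tendsto (fun t : ℝ => (x, t)) (𝓝[>] 1) (𝓝[s] (x, 1)) :=
    (Continuous.prodMk_right x).continuousWithinAt.tendsto_nhdsWithin
      fun t (ht : 1 < t) => ⟨trivial, zero_lt_one.trans ht⟩
  have hafter : ∀ t ∈ Ioi (1 : ℝ), 2 ≤ d (x, t) := fun t (ht : 1 < t) => by
    rw [hd' (x, t) ⟨trivial, zero_lt_one.trans ht⟩, if_neg ht.not_ge]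
    exact le_max_of_le_left (by linarith)
  have husc : ¬ UpperSemicontinuousWithinAt d s (x, 1) :=
    not_upperSemicontinuousWithinAt_of_frequently_le
      (hvertical.frequently (eventually_nhdsWithin_of_forall hafter).frequently) (hval ▸ hx)
  exact ⟨hlsc, husc, fun hcont => husc hcont.upperSemicontinuousWithinAt⟩
end

section
/- Define, for x ∈ ℝ and t ≥ log 2, w(x,t) = 1 if |x| ≤ t + 1 − log 2, w(x,t) = e^{t−|x|+1} − 1 if t + 1 − log 2 ≤ |x| ≤ t + 1, and w(x,t) = 0 if |x| ≥ t + 1; and define d(x,t) = (t + 1 − |x|)₊. Then: (i) w is well-defined (the three formulas agree on overlaps) and continuous; (ii) {x : w(x,t) = 0} = {x : |x| ≥ t+1}; (iii) whenever |x| = t + 1 − log 2 ≥ 1, one has d(x,t) = log 2 < 1 = w(x,t). -/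
/-! The three formulas for `w` glue to `min 1 (max 0 (exp s - 1))` evaluated at
`s = t + 1 - |x|`, the clamp to `[0, 1]` of a strictly increasing function vanishing at `0` and
equal to `1` at `log 2`. Continuity and the zero set are read off this closed form, while along
`|x| = t + 1 - log 2` the clamp has already reached `1` although the distance to the zero set is
only `log 2 < 1`. -/

open Real

section Clamp

variable {α : Type*} [LinearOrder α] {g : α → ℝ}

theorem min_one_max_zero_eq_ite (hg : Monotone g) {a b : α} (ha : g a = 0) (hb : g b = 1)
    (s : α) : min 1 (max 0 (g s)) = if b ≤ s then 1 else if a ≤ s then g s else 0 := by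
  split_ifs with hbs has
  · have : 1 ≤ g s := hb ▸ hg hbs
    rw [max_eq_right (by linarith), min_eq_left this]
  · have hlo : 0 ≤ g s := ha ▸ hg has
    have hhi : g s ≤ 1 := hb ▸ hg (not_le.1 hbs).le
    rw [max_eq_right hlo, min_eq_right hhi]
  · have : g s ≤ 0 := ha ▸ hg (not_le.1 has).le
    rw [max_eq_left this, min_eq_right zero_le_one]

theorem min_one_max_zero_eq_zero_iff (hg : StrictMono g) {a : α} (ha : g a = 0) (s : α) :
    min 1 (max 0 (g s)) = 0 ↔ s ≤ a := by
  have hclamp : ∀ y : ℝ, min 1 (max 0 y) = 0 ↔ y ≤ 0 := fun y => by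
    refine ⟨fun h => not_lt.1 fun hy => ?_, fun hy => ?_⟩
    · exact (lt_min one_pos (lt_max_of_lt_right hy)).ne' h
    · rw [max_eq_left hy, min_eq_right zero_le_one]
  rw [hclamp, ← ha, hg.le_iff_le]

end Clamp

theorem counterexample_w_exceeds_distance
    (w d : ℝ → ℝ → ℝ)
    (hw : ∀ x t : ℝ, Real.log 2 ≤ t →
      w x t = if |x| ≤ t + 1 - Real.log 2 then 1
              else if |x| ≤ t + 1 then Real.exp (t - |x| + 1) - 1 else 0)
    (hd : ∀ x t : ℝ, d x t = max (t + 1 - |x|) 0) :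
    -- (i) the three formulas agree on overlaps
    (∀ x t : ℝ, Real.log 2 ≤ t → |x| = t + 1 - Real.log 2 →
        Real.exp (t - |x| + 1) - 1 = 1) ∧
    (∀ x t : ℝ, Real.log 2 ≤ t → |x| = t + 1 →
        Real.exp (t - |x| + 1) - 1 = 0) ∧
    -- (i) continuity on { (x,t) : log 2 ≤ t }
    ContinuousOn (fun p : ℝ × ℝ => w p.1 p.2) {p : ℝ × ℝ | Real.log 2 ≤ p.2} ∧
    -- (ii) zero level set
    (∀ t : ℝ, Real.log 2 ≤ t → {x : ℝ | w x t = 0} = {x : ℝ | t + 1 ≤ |x|}) ∧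
    -- (iii) w exceeds d where |x| = t + 1 - log 2 ≥ 1
    (∀ x t : ℝ, Real.log 2 ≤ t → |x| = t + 1 - Real.log 2 → 1 ≤ |x| →
        d x t = Real.log 2 ∧ Real.log 2 < 1 ∧ w x t = 1) := by
  set g : ℝ → ℝ := fun s => exp s - 1
  have hg : StrictMono g := fun _ _ h => sub_lt_sub_right (exp_lt_exp.2 h) 1
  have hg0 : g 0 = 0 := by simp [g]
  have hg1 : g (log 2) = 1 := by norm_num [g, exp_log]
  have hw' : ∀ x t, log 2 ≤ t → w x t = min 1 (max 0 (g (t - |x| + 1))) := fun x t ht => by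
    rw [hw x t ht, min_one_max_zero_eq_ite hg.monotone hg0 hg1]
    split_ifs <;> first | rfl | linarith
  refine ⟨fun x t _ hx => ?_, fun x t _ hx => ?_, ?_, fun t ht => ?_, fun x t ht hx _ => ?_⟩
  · rw [hx, show t - (t + 1 - log 2) + 1 = log 2 by ring]; exact hg1
  · rw [hx, show t - (t + 1) + 1 = 0 by ring]; exact hg0
  · exact ContinuousOn.congr (by fun_prop : Continuous fun p : ℝ × ℝ =>
      min 1 (max 0 (g (p.2 - |p.1| + 1)))).continuousOn fun p hp => hw' p.1 p.2 hp
  · ext x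
    simp only [Set.mem_ofPred_eq, hw' x t ht, min_one_max_zero_eq_zero_iff hg hg0]
    constructor <;> intro <;> linarith
  · refine ⟨?_, log_two_lt_d9.trans (by norm_num), by rw [hw x t ht, if_pos hx.le]⟩
    rw [hd, hx, sub_sub_cancel, max_eq_left (log_pos one_lt_two).le]
end
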